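/- arXiv:2403.06733 — 3 statements merged into one kernel-verified Lean document; each statement's English description precedes it below -/
import Mathlib

section
/- Let (Ω, 𝔅, ν) be a measure space with σ-finite measure ν, let H be a complex Hilbert space, and let P : Ω → B(H) be a Bochner-integrable function (with respect to the operator norm on the Banach space B(H) of bounded operators). Then the closed linear span in B(H) of the set {∫_B P(ω) ν(dω) : B ∈ 𝔅 measurable} equals the norm closure of the set {∫_Ω f(ω) P(ω) ν(dω) : f ∈ L^∞(Ω, ν)}. -/
/-!
Every `∫_B P` is `∫ 1_B • P`, and `f ↦ ∫ f • P` is linear on `L^∞`, so the closed span of the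
`∫_B P` lies in the closure of the `∫ f • P`. Conversely, a bounded measurable `f` is the
pointwise limit of simple functions bounded by the same constant, so by dominated convergence
(with dominating function `C ‖P‖`) each `∫ f • P` is a limit of linear combinations of `∫_B P`.
-/

open MeasureTheory Filter Topology
open scoped ENNReal

namespace MeasureTheory

variable {Ω 𝕜 E : Type*} [MeasurableSpace Ω] {ν : Measure Ω} [RCLike 𝕜]
  [NormedAddCommGroup E] [NormedSpace ℝ E] [NormedSpace 𝕜 E] {P : Ω → E}

def setIntegrals (ν : Measure Ω) (P : Ω → E) : Set E :=
  {T | ∃ B : Set Ω, MeasurableSet B ∧ T = ∫ ω in B, P ω ∂ν}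

theorem setIntegral_eq_integral_indicator_one_smul {B : Set Ω} (hB : MeasurableSet B) :
    ∫ ω in B, P ω ∂ν = ∫ ω, B.indicator (1 : Ω → 𝕜) ω • P ω ∂ν := by
  simp_rw [← Set.indicator_smul_apply_left, Pi.one_apply, one_smul, integral_indicator hB]

theorem integral_add_smul_of_memLp_top (hP : Integrable P ν) {f g : Ω → 𝕜}
    (hf : MemLp f ∞ ν) (hg : MemLp g ∞ ν) :
    ∫ ω, (f + g) ω • P ω ∂ν = ∫ ω, f ω • P ω ∂ν + ∫ ω, g ω • P ω ∂ν := by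
  simp_rw [Pi.add_apply, add_smul]
  exact integral_add (hP.smul_of_top_right hf) (hP.smul_of_top_right hg)

variable [SMulCommClass ℝ 𝕜 E]

variable (𝕜) in
/-- The image `Φ̂*(L^∞(ν))` of the paper. -/
def Integrable.boundedWeightIntegrals (hP : Integrable P ν) : Submodule 𝕜 E where
  carrier := {T | ∃ f : Ω → 𝕜, MemLp f ∞ ν ∧ T = ∫ ω, f ω • P ω ∂ν}
  zero_mem' := ⟨0, memLp_top_const 0, by simp⟩
  add_mem' := by
    rintro _ _ ⟨f, hf, rfl⟩ ⟨g, hg, rfl⟩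
    exact ⟨f + g, hf.add hg, (integral_add_smul_of_memLp_top hP hf hg).symm⟩
  smul_mem' := by
    rintro c _ ⟨f, hf, rfl⟩
    refine ⟨c • f, hf.const_smul c, ?_⟩
    simp_rw [Pi.smul_apply, smul_assoc, MeasureTheory.integral_smul]

theorem setIntegrals_subset_boundedWeightIntegrals (hP : Integrable P ν) :
    setIntegrals ν P ⊆ hP.boundedWeightIntegrals 𝕜 := by
  rintro _ ⟨B, hB, rfl⟩
  refine ⟨B.indicator 1, (memLp_top_const 1).indicator hB, ?_⟩
  exact setIntegral_eq_integral_indicator_one_smul hB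

theorem integral_simpleFunc_smul_mem_span_setIntegrals (hP : Integrable P ν)
    (g : SimpleFunc Ω 𝕜) :
    ∫ ω, g ω • P ω ∂ν ∈ Submodule.span 𝕜 (setIntegrals ν P) := by
  induction g using SimpleFunc.induction with
  | @const c s hs =>
    have hg : ⇑(SimpleFunc.piecewise s hs (SimpleFunc.const Ω c) (SimpleFunc.const Ω 0))
        = c • s.indicator 1 := by
      ext ω
      rw [Pi.smul_apply, Set.smul_indicator_one_apply]
      rfl
    rw [hg]
    simp_rw [Pi.smul_apply, smul_assoc, integral_smul,
      ← setIntegral_eq_integral_indicator_one_smul hs]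
    exact Submodule.smul_mem _ _ (Submodule.subset_span ⟨s, hs, rfl⟩)
  | @add f g _ hf hg =>
    rw [SimpleFunc.coe_add, integral_add_smul_of_memLp_top hP (f.memLp_top ν) (g.memLp_top ν)]
    exact Submodule.add_mem _ hf hg

theorem integral_smul_mem_closure_span_setIntegrals (hP : Integrable P ν) {f : Ω → 𝕜}
    (hf : MemLp f ∞ ν) :
    ∫ ω, f ω • P ω ∂ν ∈ closure (Submodule.span 𝕜 (setIntegrals ν P) : Set E) := by
  set C := lpNorm f ∞ ν
  have hC : 0 ≤ C := lpNorm_nonneg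
  obtain ⟨g, hg, hfg⟩ := hf.aestronglyMeasurable
  have hg_bound : ∀ᵐ ω ∂ν, ‖g ω‖ ≤ C := by
    filter_upwards [ae_le_lpNorm_exponent_top hf, hfg] with ω hω hfgω
    rwa [← hfgω]
  rw [integral_congr_ae (hfg.mono fun ω h => by rw [h])]
  have h_lim : Tendsto (fun n => ∫ ω, hg.approxBounded C n ω • P ω ∂ν) atTop
      (𝓝 (∫ ω, g ω • P ω ∂ν)) := by
    refine tendsto_integral_of_dominated_convergence (fun ω => C * ‖P ω‖)
      (fun n => (hg.approxBounded C n).aestronglyMeasurable.smul hP.1) (hP.norm.const_mul C)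
      (fun n => ae_of_all _ fun ω => ?_) ?_
    · rw [norm_smul]
      exact mul_le_mul_of_nonneg_right (hg.norm_approxBounded_le hC n ω) (norm_nonneg _)
    · filter_upwards [hg.tendsto_approxBounded_ae hg_bound] with ω hω
      exact hω.smul_const (P ω)
  exact mem_closure_of_tendsto h_lim (Eventually.of_forall fun n =>
    integral_simpleFunc_smul_mem_span_setIntegrals hP _)

end MeasureTheory

theorem closed_span_setIntegrals_eq_closure_boundedIntegrals_general
    {Ω : Type*} [MeasurableSpace Ω] (ν : Measure Ω)
    {H : Type*} [NormedAddCommGroup H] [InnerProductSpace ℂ H]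
    (P : Ω → H →L[ℂ] H) (hP : Integrable P ν) :
    ((Submodule.span ℂ
        {T : H →L[ℂ] H | ∃ B : Set Ω, MeasurableSet B ∧ T = ∫ ω in B, P ω ∂ν}).topologicalClosure
        : Set (H →L[ℂ] H)) =
      closure {T : H →L[ℂ] H | ∃ f : Ω → ℂ, MemLp f ⊤ ν ∧ T = ∫ ω, f ω • P ω ∂ν} := by
  rw [Submodule.topologicalClosure_coe]
  apply subset_antisymm
  · exact closure_mono <| SetLike.coe_subset_coe.2 <|
      Submodule.span_le.2 (setIntegrals_subset_boundedWeightIntegrals hP)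
  · refine closure_minimal ?_ isClosed_closure
    rintro _ ⟨f, hf, rfl⟩
    exact integral_smul_mem_closure_span_setIntegrals hP hf

/-- Let `(Ω, 𝔅, ν)` be a measure space with `ν` σ-finite, `H` a
complex Hilbert space and `P : Ω → B(H)` Bochner integrable (in operator norm).
Then the closed linear span of the operators `∫_B P dν` (over measurable sets `B`)
coincides with the norm closure of the set of operators `∫_Ω f(ω) P(ω) ν(dω)` with
`f ∈ L^∞(Ω, ν)`. -/
theorem closed_span_setIntegrals_eq_closure_boundedIntegrals
    {Ω : Type*} [MeasurableSpace Ω] (ν : Measure Ω) [SigmaFinite ν]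
    {H : Type*} [NormedAddCommGroup H] [InnerProductSpace ℂ H] [CompleteSpace H]
    (P : Ω → H →L[ℂ] H) (hP : Integrable P ν) :
    ((Submodule.span ℂ
        {T : H →L[ℂ] H | ∃ B : Set Ω, MeasurableSet B ∧ T = ∫ ω in B, P ω ∂ν}).topologicalClosure
        : Set (H →L[ℂ] H)) =
      closure {T : H →L[ℂ] H | ∃ f : Ω → ℂ, MemLp f ⊤ ν ∧ T = ∫ ω, f ω • P ω ∂ν} :=
  closed_span_setIntegrals_eq_closure_boundedIntegrals_general ν P hP
end

section
/- Let (Ω, 𝔅, ν) be a measure space with σ-finite measure ν, let H be a complex Hilbert space, and let P : Ω → B(H) be a Bochner-integrable function such that P(ω) is a positive operator for ν-almost every ω. Then for every f ∈ L^∞(Ω, ν) the operator ∫_Ω f(ω) P(ω) ν(dω) satisfies ‖∫_Ω f(ω) P(ω) ν(dω)‖ ≤ ‖f‖_{L^∞} · ‖∫_Ω P(ω) ν(dω)‖, where ‖·‖ is the operator norm. -/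
/-!
For a positive operator `A`, `(x, y) ↦ ⟪x, A y⟫` is a semi-inner product, so Cauchy–Schwarz and
AM–GM give `2 |⟪x, A y⟫| ≤ ⟪x, A x⟫ + ⟪y, A y⟫`. Applying this to `P ω` under the integral and
using `|f| ≤ ‖f‖_∞` a.e., with `S = ∫ P` and `T = ∫ f P`,
`2 |⟪x, T y⟫| ≤ ‖f‖_∞ (⟪x, S x⟫ + ⟪y, S y⟫) ≤ ‖f‖_∞ ‖S‖ (‖x‖² + ‖y‖²)`,
and testing against `x` parallel to `T y` with `‖x‖ = ‖y‖` bounds `‖T‖`.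
-/

open MeasureTheory

open scoped InnerProductSpace

namespace ContinuousLinearMap

variable {𝕜 E : Type*} [RCLike 𝕜] [NormedAddCommGroup E] [InnerProductSpace 𝕜 E]

noncomputable abbrev IsPositive.preInnerProductSpaceCore {T : E →L[𝕜] E} (hT : T.IsPositive) :
    PreInnerProductSpace.Core 𝕜 E where
  inner x y := ⟪x, T y⟫_𝕜
  conj_inner_symm x y := by
    rw [inner_conj_symm, hT.inner_left_eq_inner_right]
  re_inner_nonneg := hT.re_inner_nonneg_right
  add_left x y z := inner_add_left x y (T z)
  smul_left x y r := inner_smul_left x (T y) r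

theorem IsPositive.norm_inner_sq_le {T : E →L[𝕜] E} (hT : T.IsPositive) (x y : E) :
    ‖⟪x, T y⟫_𝕜‖ ^ 2 ≤ RCLike.re ⟪x, T x⟫_𝕜 * RCLike.re ⟪y, T y⟫_𝕜 := by
  have h : ‖⟪x, T y⟫_𝕜‖ * ‖⟪y, T x⟫_𝕜‖ ≤ RCLike.re ⟪x, T x⟫_𝕜 * RCLike.re ⟪y, T y⟫_𝕜 :=
    InnerProductSpace.Core.inner_mul_inner_self_le (c := hT.preInnerProductSpaceCore) x y
  rwa [norm_inner_symm y, hT.inner_left_eq_inner_right, ← sq] at h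

theorem IsPositive.two_mul_norm_inner_le {T : E →L[𝕜] E} (hT : T.IsPositive) (x y : E) :
    2 * ‖⟪x, T y⟫_𝕜‖ ≤ RCLike.re ⟪x, T x⟫_𝕜 + RCLike.re ⟪y, T y⟫_𝕜 := by
  nlinarith [hT.norm_inner_sq_le x y, hT.re_inner_nonneg_right x, hT.re_inner_nonneg_right y,
    sq_nonneg (RCLike.re ⟪x, T x⟫_𝕜 - RCLike.re ⟪y, T y⟫_𝕜), norm_nonneg ⟪x, T y⟫_𝕜]

theorem re_inner_apply_self_le (T : E →L[𝕜] E) (x : E) :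
    RCLike.re ⟪x, T x⟫_𝕜 ≤ ‖T‖ * ‖x‖ ^ 2 :=
  calc RCLike.re ⟪x, T x⟫_𝕜 ≤ ‖x‖ * ‖T x‖ := (RCLike.re_le_norm _).trans (norm_inner_le_norm _ _)
    _ ≤ ‖x‖ * (‖T‖ * ‖x‖) := by gcongr; exact T.le_opNorm x
    _ = ‖T‖ * ‖x‖ ^ 2 := by ring

variable {F : Type*} [NormedAddCommGroup F] [InnerProductSpace 𝕜 F]

theorem opNorm_le_of_two_mul_norm_inner_le (T : E →L[𝕜] F) {C : ℝ} (hC : 0 ≤ C)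
    (h : ∀ x y, 2 * ‖⟪x, T y⟫_𝕜‖ ≤ C * (‖x‖ ^ 2 + ‖y‖ ^ 2)) : ‖T‖ ≤ C := by
  refine T.opNorm_le_bound hC fun y => ?_
  rcases eq_or_ne (T y) 0 with hTy | hTy
  · rw [hTy, norm_zero]; positivity
  have hTy' : 0 < ‖T y‖ := norm_pos_iff.mpr hTy
  set x : F := ((‖y‖ / ‖T y‖ : ℝ) : 𝕜) • T y
  have hx : ‖x‖ = ‖y‖ := by
    simp [x, norm_smul, hTy'.ne']
  have hxTy : ‖⟪x, T y⟫_𝕜‖ = ‖y‖ * ‖T y‖ := by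
    simp only [x, inner_smul_left, map_div₀, RCLike.conj_ofReal, inner_self_eq_norm_sq_to_K,
      norm_mul, norm_div, norm_algebraMap', norm_norm, norm_pow]
    field_simp
  have hy : 0 < ‖y‖ := norm_pos_iff.mpr fun hy => hTy (by rw [hy, map_zero])
  have hxy := h x y
  rw [hx, hxTy] at hxy
  nlinarith

end ContinuousLinearMap

theorem MeasureTheory.ae_norm_le_toReal_eLpNorm_top {α E : Type*} [MeasurableSpace α]
    {μ : Measure α} [NormedAddCommGroup E] {f : α → E} (hf : eLpNorm f ⊤ μ ≠ ⊤) :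
    ∀ᵐ a ∂μ, ‖f a‖ ≤ (eLpNorm f ⊤ μ).toReal := by
  rw [eLpNorm_exponent_top] at hf ⊢
  filter_upwards [ae_le_eLpNormEssSup (f := f) (μ := μ)] with a ha
  rw [← toReal_enorm (f a)]
  exact ENNReal.toReal_mono hf ha

section IntegralOfPositive

variable {Ω H : Type*} [MeasurableSpace Ω] {ν : Measure Ω}
  [NormedAddCommGroup H] [InnerProductSpace ℂ H] [CompleteSpace H] {P : Ω → H →L[ℂ] H}

theorem inner_integral_apply (hP : Integrable P ν) (x y : H) :
    ⟪x, (∫ ω, P ω ∂ν) y⟫_ℂ = ∫ ω, ⟪x, P ω y⟫_ℂ ∂ν := by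
  rw [ContinuousLinearMap.integral_apply hP, integral_inner (hP.apply_continuousLinearMap y)]

theorem re_inner_integral_apply_self (hP : Integrable P ν) (x : H) :
    (⟪x, (∫ ω, P ω ∂ν) x⟫_ℂ).re = ∫ ω, (⟪x, P ω x⟫_ℂ).re ∂ν := by
  rw [inner_integral_apply hP, ← RCLike.re_to_complex,
    ← integral_re ((hP.apply_continuousLinearMap x).const_inner x)]
  rfl

theorem two_mul_norm_inner_integral_smul_apply_le (hP : Integrable P ν)
    (hPpos : ∀ᵐ ω ∂ν, (P ω).IsPositive) {f : Ω → ℂ} {M : ℝ}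
    (hfP : Integrable (fun ω => f ω • P ω) ν) (hfM : ∀ᵐ ω ∂ν, ‖f ω‖ ≤ M) (x y : H) :
    2 * ‖⟪x, (∫ ω, f ω • P ω ∂ν) y⟫_ℂ‖ ≤
      M * ((⟪x, (∫ ω, P ω ∂ν) x⟫_ℂ).re + (⟪y, (∫ ω, P ω ∂ν) y⟫_ℂ).re) := by
  have hq : ∀ z, Integrable (fun ω => (⟪z, P ω z⟫_ℂ).re) ν := fun z =>
    ((hP.apply_continuousLinearMap z).const_inner (𝕜 := ℂ) z).re
  have hpointwise : ∀ᵐ ω ∂ν, ‖⟪x, (f ω • P ω) y⟫_ℂ‖ ≤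
      M / 2 * ((⟪x, P ω x⟫_ℂ).re + (⟪y, P ω y⟫_ℂ).re) := by
    filter_upwards [hPpos, hfM] with ω hpos hf
    rw [smul_apply, inner_smul_right, norm_mul]
    have := hpos.two_mul_norm_inner_le x y
    simp only [RCLike.re_to_complex] at this
    nlinarith [norm_nonneg (f ω), norm_nonneg ⟪x, P ω y⟫_ℂ]
  calc 2 * ‖⟪x, (∫ ω, f ω • P ω ∂ν) y⟫_ℂ‖
      ≤ 2 * ∫ ω, M / 2 * ((⟪x, P ω x⟫_ℂ).re + (⟪y, P ω y⟫_ℂ).re) ∂ν := by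
        rw [inner_integral_apply hfP]
        gcongr
        exact norm_integral_le_of_norm_le (((hq x).add (hq y)).const_mul _) hpointwise
    _ = M * ((⟪x, (∫ ω, P ω ∂ν) x⟫_ℂ).re + (⟪y, (∫ ω, P ω ∂ν) y⟫_ℂ).re) := by
        rw [integral_const_mul, integral_add (hq x) (hq y), re_inner_integral_apply_self hP,
          re_inner_integral_apply_self hP]
        ring

end IntegralOfPositive

theorem norm_integral_smul_le_of_ae_isPositive_general
    {Ω : Type*} [MeasurableSpace Ω] (ν : Measure Ω)
    {H : Type*} [NormedAddCommGroup H] [InnerProductSpace ℂ H] [CompleteSpace H]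
    (P : Ω → H →L[ℂ] H) (hP : Integrable P ν)
    (hPpos : ∀ᵐ ω ∂ν, (P ω).IsPositive)
    (f : Ω → ℂ) (hf : MemLp f ⊤ ν) :
    ‖∫ ω, f ω • P ω ∂ν‖ ≤ (eLpNorm f ⊤ ν).toReal * ‖∫ ω, P ω ∂ν‖ := by
  set S := ∫ ω, P ω ∂ν
  refine ContinuousLinearMap.opNorm_le_of_two_mul_norm_inner_le _ (by positivity) fun x y => ?_
  calc _ ≤ (eLpNorm f ⊤ ν).toReal * ((⟪x, S x⟫_ℂ).re + (⟪y, S y⟫_ℂ).re) :=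
        two_mul_norm_inner_integral_smul_apply_le hP hPpos (hP.smul_of_top_right hf)
          (ae_norm_le_toReal_eLpNorm_top hf.eLpNorm_ne_top) x y
    _ ≤ (eLpNorm f ⊤ ν).toReal * (‖S‖ * ‖x‖ ^ 2 + ‖S‖ * ‖y‖ ^ 2) := by
        gcongr <;> exact S.re_inner_apply_self_le _
    _ = (eLpNorm f ⊤ ν).toReal * ‖S‖ * (‖x‖ ^ 2 + ‖y‖ ^ 2) := by ring

/-- Let `(Ω, 𝔅, ν)` be a measure space with `ν` σ-finite, `H` a
complex Hilbert space and `P : Ω → B(H)` Bochner integrable with `P(ω)` a positive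
operator for ν-a.e. `ω`.  Then for every `f ∈ L^∞(Ω, ν)`,
`‖∫ f(ω) P(ω) ν(dω)‖ ≤ ‖f‖_{L^∞} ⬝ ‖∫ P(ω) ν(dω)‖` in the operator norm. -/
theorem norm_integral_smul_le_of_ae_isPositive
    {Ω : Type*} [MeasurableSpace Ω] (ν : Measure Ω) [SigmaFinite ν]
    {H : Type*} [NormedAddCommGroup H] [InnerProductSpace ℂ H] [CompleteSpace H]
    (P : Ω → H →L[ℂ] H) (hP : Integrable P ν)
    (hPpos : ∀ᵐ ω ∂ν, (P ω).IsPositive)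
    (f : Ω → ℂ) (hf : MemLp f ⊤ ν) :
    ‖∫ ω, f ω • P ω ∂ν‖ ≤ (eLpNorm f ⊤ ν).toReal * ‖∫ ω, P ω ∂ν‖ :=
  norm_integral_smul_le_of_ae_isPositive_general ν P hP hPpos f hf
end

section
/- Let (J_k)_{k∈ℕ₀} be a sequence of distinct real numbers and (c_k)_{k∈ℕ₀} positive real numbers, and let R ∈ (0, ∞] be such that N(x)² := Σ_{k=0}^∞ x^k / c_k converges and is positive for all x ∈ [0, R). Let τ : [0, R) → [0, ∞) be a measurable function satisfying the moment conditions ∫_0^R (x^k / N(x)²) τ(x) dx = c_k for all k ∈ ℕ₀, and let μ be a measure on ℝ such that ∫ e^{i(J_k − J_l) y} μ(dy) = δ_{kl} for all k, l ∈ ℕ₀. For x ∈ [0, R) and y ∈ ℝ define the unit vector |J, x, y⟩ = N(x)^{-1} Σ_{k=0}^∞ (x^{k/2} e^{-i J_k y}/√c_k) e_k in ℓ²(ℕ₀), where (e_k) is the standard orthonormal basis. Then for every ψ ∈ ℓ²(ℕ₀), ∫_ℝ ∫_0^R |⟨J, x, y | ψ⟩|² τ(x) dx μ(dy) = ‖ψ‖².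 -/
/-!
Writing `⟨J,x,y|ψ⟩ = ∑_k r_k(x) ψ_k e^{i J_k y}` with `r_k(x) = x^{k/2} / (N(x) √c_k)`, the
orthonormality of the phases `y ↦ e^{i J_k y}` in `L²(μ)` kills the off-diagonal terms of
`|⟨J,x,y|ψ⟩|²`, so that `∫ |⟨J,x,y|ψ⟩|² dμ(y) = ∑_k x^k |ψ_k|² / (N(x)² c_k)`. Integrating this
against `τ(x) dx`, the moment conditions turn the `k`-th term into `|ψ_k|²`. Every integrand is
nonnegative, so Tonelli justifies both exchanging the two integrations and integrating the series
termwise. `N` is only prescribed on `[0, R)`, where it is the square root of a convergent series of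
measurable functions, hence almost everywhere measurable.
-/

open MeasureTheory
open scoped ENNReal

/-- The `k`-th coefficient of the Gazeau–Klauder coherent state
`|J,x,y⟩ = N(x)⁻¹ ∑_k (x^{k/2} e^{-i J_k y} / √c_k) e_k` in the standard orthonormal
basis of `ℓ²(ℕ₀)`; here `NN = N` is the normalization factor. -/
noncomputable def gkCoeff (NN : ℝ → ℝ) (c : ℕ → ℝ) (J : ℕ → ℝ) (x y : ℝ) (k : ℕ) : ℂ :=
  (((NN x)⁻¹ * Real.sqrt x ^ k / Real.sqrt (c k) : ℝ) : ℂ) *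
    Complex.exp (-(Complex.I * (J k : ℂ) * (y : ℂ)))

open Filter Function
open scoped ComplexConjugate

theorem summable_abs_mul_abs_of_summable_sq {ι : Type*} {f g : ι → ℝ}
    (hf : Summable fun i => f i ^ 2) (hg : Summable fun i => g i ^ 2) :
    Summable fun i => |f i| * |g i| := by
  refine .of_nonneg_of_le (fun i => by positivity) (fun i => ?_) ((hf.add hg).div_const 2)
  have := two_mul_le_add_sq |f i| |g i|
  rw [sq_abs, sq_abs] at this
  linarith

theorem tsum_prod_ite_fst_eq_snd {ι M : Type*} [AddCommMonoid M] [TopologicalSpace M]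
    [DecidableEq ι] (f : ι → M) : ∑' p : ι × ι, (if p.1 = p.2 then f p.1 else 0) = ∑' i, f i := by
  have hdiag : Injective fun i : ι => (i, i) := fun i j h => congrArg Prod.fst h
  rw [← hdiag.tsum_eq]
  · simp
  · rintro ⟨i, j⟩ hij
    obtain rfl : i = j := by by_contra h; exact hij (if_neg h)
    exact ⟨i, rfl⟩

theorem aestronglyMeasurable_tsum {α ι E : Type*} [MeasurableSpace α] [Countable ι]
    {μ : Measure α} [NormedAddCommGroup E] {f : ι → α → E}
    (hf : ∀ i, AEStronglyMeasurable (f i) μ) (hsum : ∀ᵐ a ∂μ, Summable fun i => f i a) :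
    AEStronglyMeasurable (fun a => ∑' i, f i a) μ :=
  aestronglyMeasurable_of_tendsto_ae atTop
    (fun s => Finset.aestronglyMeasurable_fun_sum s fun i _ => hf i)
    (hsum.mono fun _ h => h.hasSum)

theorem summable_norm_mul_of_norm_le_one {ι : Type*} {b e : ι → ℂ} (he : ∀ i, ‖e i‖ ≤ 1)
    (hb : Summable fun i => ‖b i‖) : Summable fun i => ‖b i * e i‖ :=
  hb.of_nonneg_of_le (fun _ => norm_nonneg _) fun i =>
    (norm_mul_le _ _).trans (mul_le_of_le_one_right (norm_nonneg _) (he i))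

section OrthonormalSystem

variable {α ι : Type*} [MeasurableSpace α] {μ : Measure α} {e : ι → α → ℂ} {b : ι → ℂ}

theorem integrable_norm_tsum_mul_sq [Countable ι] [IsFiniteMeasure μ]
    (he_meas : ∀ i, AEStronglyMeasurable (e i) μ) (he : ∀ i a, ‖e i a‖ ≤ 1)
    (hb : Summable fun i => ‖b i‖) :
    Integrable (fun a => ‖∑' i, b i * e i a‖ ^ 2) μ := by
  have hsum : ∀ a, Summable fun i => ‖b i * e i a‖ := fun a =>
    summable_norm_mul_of_norm_le_one (fun i => he i a) hb
  have hF : AEStronglyMeasurable (fun a => ∑' i, b i * e i a) μ :=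
    aestronglyMeasurable_tsum (fun i => (he_meas i).const_mul (b i))
      (ae_of_all _ fun a => (hsum a).of_norm)
  refine Integrable.of_bound (hF.norm.pow 2) ((∑' i, ‖b i‖) ^ 2) (ae_of_all _ fun a => ?_)
  have hle : ‖∑' i, b i * e i a‖ ≤ ∑' i, ‖b i‖ :=
    (norm_tsum_le_tsum_norm (hsum a)).trans <| (hsum a).tsum_le_tsum
      (fun i => (norm_mul_le _ _).trans (mul_le_of_le_one_right (norm_nonneg _) (he i a))) hb
  rw [norm_pow, norm_norm]
  gcongr

theorem integral_norm_tsum_mul_sq_of_orthonormal [Countable ι] [DecidableEq ι] [IsFiniteMeasure μ]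
    (he_meas : ∀ i, AEStronglyMeasurable (e i) μ) (he : ∀ i a, ‖e i a‖ ≤ 1)
    (horth : ∀ i j, ∫ a, e i a * conj (e j a) ∂μ = if i = j then 1 else 0)
    (hb : Summable fun i => ‖b i‖) :
    ∫ a, ‖∑' i, b i * e i a‖ ^ 2 ∂μ = ∑' i, ‖b i‖ ^ 2 := by
  set w : ι × ι → α → ℂ := fun p a => b p.1 * conj (b p.2) * (e p.1 a * conj (e p.2 a))
  have hbb : Summable fun p : ι × ι => ‖b p.1‖ * ‖b p.2‖ :=
    hb.mul_of_nonneg hb (fun _ => norm_nonneg _) (fun _ => norm_nonneg _)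
  have hw_le : ∀ p a, ‖w p a‖ ≤ ‖b p.1‖ * ‖b p.2‖ := fun p a => by
    have := mul_le_one₀ (he p.1 a) (norm_nonneg _) (he p.2 a)
    simp only [w, norm_mul, RCLike.norm_conj]
    exact mul_le_of_le_one_right (by positivity) this
  have hw_int : ∀ p, Integrable (w p) μ := fun p =>
    Integrable.of_bound (((he_meas p.1).mul (he_meas p.2).star).const_mul _) _
      (ae_of_all _ (hw_le p))
  have hw_sum : Summable fun p => ∫ a, ‖w p a‖ ∂μ := by
    refine Summable.of_nonneg_of_le (fun p => integral_nonneg fun a => norm_nonneg _)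
      (fun p => ?_) (hbb.mul_left (μ.real Set.univ))
    simpa only [integral_const, smul_eq_mul] using
      integral_mono (hw_int p).norm (integrable_const _) (hw_le p)
  have hsq : ∀ a, ((‖∑' i, b i * e i a‖ ^ 2 : ℝ) : ℂ) = ∑' p, w p a := fun a => by
    have hsum := summable_norm_mul_of_norm_le_one (fun i => he i a) hb
    rw [Complex.ofReal_pow, ← Complex.mul_conj', Complex.conj_tsum,
      tsum_mul_tsum_of_summable_norm hsum (by simpa only [RCLike.norm_conj] using hsum)]
    exact tsum_congr fun p => by simp only [w, map_mul]; ring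
  have hw_integral : ∀ p : ι × ι,
      ∫ a, w p a ∂μ = if p.1 = p.2 then ((‖b p.1‖ ^ 2 : ℝ) : ℂ) else 0 := by
    rintro ⟨i, j⟩
    rw [integral_const_mul, horth]
    dsimp only
    split_ifs with hij
    · subst hij; rw [mul_one, Complex.mul_conj', Complex.ofReal_pow]
    · rw [mul_zero]
  apply Complex.ofReal_injective
  calc ((∫ a, ‖∑' i, b i * e i a‖ ^ 2 ∂μ : ℝ) : ℂ)
      = ∫ a, ∑' p, w p a ∂μ := by rw [← integral_complex_ofReal]; simp_rw [hsq]
    _ = ∑' p, ∫ a, w p a ∂μ := (integral_tsum_of_summable_integral_norm hw_int hw_sum).symm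
    _ = ∑' i, ((‖b i‖ ^ 2 : ℝ) : ℂ) := by
      simp_rw [hw_integral]; exact tsum_prod_ite_fst_eq_snd fun i => ((‖b i‖ ^ 2 : ℝ) : ℂ)
    _ = ((∑' i, ‖b i‖ ^ 2 : ℝ) : ℂ) := (Complex.ofReal_tsum _).symm

end OrthonormalSystem

theorem integral_integral_swap_eq_toReal_of_nonneg {α β : Type*} [MeasurableSpace α]
    [MeasurableSpace β] {μ : Measure α} {ν : Measure β} [SFinite μ] [SFinite ν] {f : α → β → ℝ}
    (hf : AEStronglyMeasurable (uncurry f) (μ.prod ν)) (hf0 : 0 ≤ᵐ[μ.prod ν] uncurry f)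
    (hfin : ∫⁻ x, ∫⁻ y, ENNReal.ofReal (f x y) ∂ν ∂μ ≠ ∞) :
    ∫ y, ∫ x, f x y ∂μ ∂ν = (∫⁻ x, ∫⁻ y, ENNReal.ofReal (f x y) ∂ν ∂μ).toReal := by
  have hlint : ∫⁻ p, ENNReal.ofReal (uncurry f p) ∂μ.prod ν
      = ∫⁻ x, ∫⁻ y, ENNReal.ofReal (f x y) ∂ν ∂μ :=
    lintegral_prod _ hf.aemeasurable.ennreal_ofReal
  have hint : Integrable (uncurry f) (μ.prod ν) := by
    refine ⟨hf, ?_⟩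
    rw [hasFiniteIntegral_iff_ofReal hf0, hlint]
    exact hfin.lt_top
  rw [← integral_integral_swap hint, integral_integral hint, ← hlint]
  exact integral_eq_lintegral_of_nonneg_ae hf0 hf

theorem lp.hasSum_norm_sq {ι : Type*} {E : ι → Type*} [∀ i, NormedAddCommGroup (E i)]
    (ψ : lp E 2) : HasSum (fun i => ‖ψ i‖ ^ 2) (‖ψ‖ ^ 2) := by
  simpa only [ENNReal.toReal_ofNat, Real.rpow_two] using lp.hasSum_norm (by norm_num) ψ

theorem AEMeasurable.of_ae_hasSum_sq {α : Type*} [MeasurableSpace α] {ν : Measure α}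
    {f : ℕ → α → ℝ} {g : α → ℝ} (hf : ∀ k, AEMeasurable (f k) ν)
    (h : ∀ᵐ x ∂ν, HasSum (fun k => f k x) (g x ^ 2) ∧ 0 ≤ g x) : AEMeasurable g ν := by
  have hsum : AEStronglyMeasurable (fun x => ∑' k, f k x) ν :=
    aestronglyMeasurable_tsum (fun k => (hf k).aestronglyMeasurable)
      (h.mono fun _ hx => hx.1.summable)
  refine (hsum.aemeasurable.sqrt).congr (h.mono fun x hx => ?_)
  dsimp only
  rw [hx.1.tsum_eq, Real.sqrt_sq hx.2]

theorem lintegral_ofReal_div_mul_eq_of_integral_eq {α : Type*} [MeasurableSpace α]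
    {ν : Measure α} {g : α → ℝ} {a b : ℝ} (hg : ∫ x, g x ∂ν = b) (hb : 0 < b)
    (hg0 : 0 ≤ᵐ[ν] g) (ha : 0 ≤ a) :
    ∫⁻ x, ENNReal.ofReal (a / b * g x) ∂ν = ENNReal.ofReal a := by
  have hint : Integrable g ν := .of_integral_ne_zero (hg ▸ hb.ne')
  rw [← ofReal_integral_eq_lintegral_ofReal (hint.const_mul _)
    (hg0.mono fun x hx => mul_nonneg (div_nonneg ha hb.le) hx), integral_const_mul, hg,
    div_mul_cancel₀ _ hb.ne']

theorem lintegral_tsum_ofReal_div_mul_eq_of_integral_eq {α : Type*} [MeasurableSpace α]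
    {ν : Measure α} {g : ℕ → α → ℝ} {a b : ℕ → ℝ} {A : ℝ} (hg_meas : ∀ k, AEMeasurable (g k) ν)
    (hg : ∀ k, ∫ x, g k x ∂ν = b k) (hb : ∀ k, 0 < b k) (hg0 : ∀ k, 0 ≤ᵐ[ν] g k)
    (ha : ∀ k, 0 ≤ a k) (hA : HasSum a A) :
    ∫⁻ x, ∑' k, ENNReal.ofReal (a k / b k * g k x) ∂ν = ENNReal.ofReal A := by
  rw [lintegral_tsum fun k => by fun_prop, ← hA.tsum_eq, ENNReal.ofReal_tsum_of_nonneg ha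
    hA.summable]
  exact tsum_congr fun k =>
    lintegral_ofReal_div_mul_eq_of_integral_eq (hg k) (hb k) (hg0 k) (ha k)

noncomputable def gkAmp (NN : ℝ → ℝ) (c : ℕ → ℝ) (x : ℝ) (k : ℕ) : ℝ :=
  (NN x)⁻¹ * Real.sqrt x ^ k / Real.sqrt (c k)

section GazeauKlauder

variable {NN : ℝ → ℝ} {c J : ℕ → ℝ} {x : ℝ}

theorem conj_gkCoeff_mul (y : ℝ) (k : ℕ) (z : ℂ) :
    conj (gkCoeff NN c J x y k) * z =
      (gkAmp NN c x k * z) * Complex.exp (Complex.I * (J k * y : ℝ)) := by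
  simp only [gkCoeff, gkAmp, map_mul, Complex.conj_ofReal, ← Complex.exp_conj, map_neg,
    Complex.conj_I]
  push_cast
  ring_nf

theorem gkAmp_sq {k : ℕ} (hx : 0 ≤ x) (hc : 0 ≤ c k) : gkAmp NN c x k ^ 2 = x ^ k / NN x ^ 2 / c k := by
  rw [gkAmp, div_pow, mul_pow, ← pow_mul, mul_comm k, pow_mul, Real.sq_sqrt hx,
    Real.sq_sqrt hc, inv_pow, div_eq_mul_inv (x ^ k)]
  ring

theorem summable_norm_gkAmp_mul (hc : ∀ k, 0 ≤ c k) (hx : 0 ≤ x)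
    (hsum : Summable fun k => x ^ k / c k) (ψ : lp (fun _ : ℕ => ℂ) 2) :
    Summable fun k => ‖(gkAmp NN c x k : ℂ) * ψ k‖ := by
  have hamp : Summable fun k => gkAmp NN c x k ^ 2 :=
    (hsum.div_const (NN x ^ 2)).congr fun k => by rw [gkAmp_sq hx (hc k), div_right_comm]
  simpa only [norm_mul, Complex.norm_real, Real.norm_eq_abs, abs_norm] using
    summable_abs_mul_abs_of_summable_sq hamp (lp.hasSum_norm_sq ψ).summable

theorem summable_conj_gkCoeff_mul (hc : ∀ k, 0 ≤ c k) (hx : 0 ≤ x)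
    (hsum : Summable fun k => x ^ k / c k) (ψ : lp (fun _ : ℕ => ℂ) 2) (y : ℝ) :
    Summable fun k => conj (gkCoeff NN c J x y k) * ψ k := by
  simp_rw [conj_gkCoeff_mul]
  exact (summable_norm_mul_of_norm_le_one (fun k => (Complex.norm_exp_I_mul_ofReal _).le)
    (summable_norm_gkAmp_mul hc hx hsum ψ)).of_norm

theorem integral_exp_mul_conj_exp {μ : Measure ℝ} (k l : ℕ) :
    ∫ y, Complex.exp (Complex.I * (J k * y : ℝ)) * conj (Complex.exp (Complex.I * (J l * y : ℝ))) ∂μ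
      = ∫ y, Complex.exp (Complex.I * (((J k - J l : ℝ)) : ℂ) * (y : ℂ)) ∂μ := by
  congr 1 with y
  rw [← Complex.exp_conj, ← Complex.exp_add]
  simp only [map_mul, Complex.conj_I, Complex.conj_ofReal]
  push_cast
  ring_nf

variable {μ : Measure ℝ} [IsFiniteMeasure μ]

theorem integrable_norm_tsum_conj_gkCoeff_mul_sq (hc : ∀ k, 0 ≤ c k) (hx : 0 ≤ x)
    (hsum : Summable fun k => x ^ k / c k) (ψ : lp (fun _ : ℕ => ℂ) 2) :
    Integrable (fun y => ‖∑' k, conj (gkCoeff NN c J x y k) * ψ k‖ ^ 2) μ := by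
  simp_rw [conj_gkCoeff_mul]
  exact integrable_norm_tsum_mul_sq (fun k => by fun_prop)
    (fun k y => (Complex.norm_exp_I_mul_ofReal _).le) (summable_norm_gkAmp_mul hc hx hsum ψ)

theorem integral_norm_tsum_conj_gkCoeff_mul_sq (hc : ∀ k, 0 ≤ c k) (hx : 0 ≤ x)
    (hsum : Summable fun k => x ^ k / c k)
    (hμ : ∀ k l : ℕ,
      ∫ y, Complex.exp (Complex.I * (((J k - J l : ℝ)) : ℂ) * (y : ℂ)) ∂μ =
        if k = l then 1 else 0)
    (ψ : lp (fun _ : ℕ => ℂ) 2) :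
    ∫ y, ‖∑' k, conj (gkCoeff NN c J x y k) * ψ k‖ ^ 2 ∂μ
      = ∑' k, ‖ψ k‖ ^ 2 / c k * (x ^ k / NN x ^ 2) := by
  simp_rw [conj_gkCoeff_mul]
  rw [integral_norm_tsum_mul_sq_of_orthonormal (fun k => by fun_prop)
    (fun k y => (Complex.norm_exp_I_mul_ofReal _).le)
    (fun k l => (integral_exp_mul_conj_exp k l).trans (hμ k l))
    (summable_norm_gkAmp_mul hc hx hsum ψ)]
  refine tsum_congr fun k => ?_
  rw [norm_mul, Complex.norm_real, Real.norm_eq_abs, mul_pow, sq_abs, gkAmp_sq hx (hc k)]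
  ring

theorem lintegral_ofReal_norm_tsum_conj_gkCoeff_mul_sq_mul (hc : ∀ k, 0 ≤ c k) (hx : 0 ≤ x)
    (hsum : Summable fun k => x ^ k / c k)
    (hμ : ∀ k l : ℕ,
      ∫ y, Complex.exp (Complex.I * (((J k - J l : ℝ)) : ℂ) * (y : ℂ)) ∂μ =
        if k = l then 1 else 0)
    (ψ : lp (fun _ : ℕ => ℂ) 2) {t : ℝ} (ht : 0 ≤ t) :
    ∫⁻ y, ENNReal.ofReal (‖∑' k, conj (gkCoeff NN c J x y k) * ψ k‖ ^ 2 * t) ∂μ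
      = ∑' k, ENNReal.ofReal (‖ψ k‖ ^ 2 / c k * (x ^ k / NN x ^ 2 * t)) := by
  have hweight : ∀ k, 0 ≤ t / NN x ^ 2 * (x ^ k / c k) := fun k =>
    mul_nonneg (div_nonneg ht (sq_nonneg _)) (div_nonneg (pow_nonneg hx k) (hc k))
  have hterm : ∀ k, ‖ψ k‖ ^ 2 / c k * (x ^ k / NN x ^ 2 * t)
      = ‖ψ k‖ ^ 2 * (t / NN x ^ 2 * (x ^ k / c k)) := fun k => by ring
  have hterm_summable : Summable fun k => ‖ψ k‖ ^ 2 / c k * (x ^ k / NN x ^ 2 * t) := by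
    simp_rw [hterm]
    refine .of_nonneg_of_le (fun k => mul_nonneg (sq_nonneg _) (hweight k)) (fun k => ?_)
      ((hsum.mul_left (t / NN x ^ 2)).mul_left (‖ψ‖ ^ 2))
    exact mul_le_mul_of_nonneg_right
      (pow_le_pow_left₀ (norm_nonneg _) (lp.norm_apply_le_norm two_ne_zero ψ k) 2) (hweight k)
  have hterm_nonneg : ∀ k, 0 ≤ ‖ψ k‖ ^ 2 / c k * (x ^ k / NN x ^ 2 * t) := fun k =>
    (hterm k).symm ▸ mul_nonneg (sq_nonneg _) (hweight k)
  rw [← ofReal_integral_eq_lintegral_ofReal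
      ((integrable_norm_tsum_conj_gkCoeff_mul_sq hc hx hsum ψ).mul_const _)
      (ae_of_all _ fun y => mul_nonneg (sq_nonneg _) ht),
    integral_mul_const, integral_norm_tsum_conj_gkCoeff_mul_sq hc hx hsum hμ, ← tsum_mul_right]
  simp_rw [mul_assoc]
  exact ENNReal.ofReal_tsum_of_nonneg hterm_nonneg hterm_summable

end GazeauKlauder

theorem gazeauKlauder_resolution_of_identity_of_ae {ν μ : Measure ℝ} [SFinite ν]
    [IsFiniteMeasure μ] {NN τ : ℝ → ℝ} {c J : ℕ → ℝ} (hc : ∀ k, 0 < c k)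
    (hgood : ∀ᵐ x ∂ν, 0 ≤ x ∧ HasSum (fun k => x ^ k / c k) (NN x ^ 2) ∧ 0 ≤ NN x ∧ 0 ≤ τ x)
    (hτ : AEMeasurable τ ν) (hmoment : ∀ k, ∫ x, x ^ k / NN x ^ 2 * τ x ∂ν = c k)
    (hμ : ∀ k l : ℕ,
      ∫ y, Complex.exp (Complex.I * (((J k - J l : ℝ)) : ℂ) * (y : ℂ)) ∂μ =
        if k = l then 1 else 0)
    (ψ : lp (fun _ : ℕ => ℂ) 2) :
    ∫ y, ∫ x, ‖∑' k, conj (gkCoeff NN c J x y k) * ψ k‖ ^ 2 * τ x ∂ν ∂μ = ‖ψ‖ ^ 2 := by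
  have hc0 : ∀ k, 0 ≤ c k := fun k => (hc k).le
  have hNN : AEMeasurable NN ν :=
    .of_ae_hasSum_sq (fun k => by fun_prop) (hgood.mono fun _ hx => ⟨hx.2.1, hx.2.2.1⟩)
  set f : ℝ → ℝ → ℝ := fun x y => ‖∑' k, conj (gkCoeff NN c J x y k) * ψ k‖ ^ 2 * τ x
  have hgood_prod := (Measure.quasiMeasurePreserving_fst (ν := μ)).ae hgood
  have hf_meas : AEStronglyMeasurable (uncurry f) (ν.prod μ) := by
    have hNN' := hNN.comp_fst (ν := μ)
    have hτ' := hτ.comp_fst (ν := μ)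
    refine ((aestronglyMeasurable_tsum (fun k => ?_) (hgood_prod.mono fun p hp =>
      summable_conj_gkCoeff_mul hc0 hp.1 hp.2.1.summable ψ p.2)).norm.pow 2).mul
        hτ'.aestronglyMeasurable
    simp only [gkCoeff]
    fun_prop
  have hf_nonneg : 0 ≤ᵐ[ν.prod μ] uncurry f :=
    hgood_prod.mono fun p hp => mul_nonneg (sq_nonneg _) hp.2.2.2
  have hkey : ∫⁻ x, ∫⁻ y, ENNReal.ofReal (f x y) ∂μ ∂ν = ENNReal.ofReal (‖ψ‖ ^ 2) := by
    rw [← lintegral_tsum_ofReal_div_mul_eq_of_integral_eq (fun k => by fun_prop) hmoment hc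
      (fun k => hgood.mono fun x hx =>
        mul_nonneg (div_nonneg (pow_nonneg hx.1 k) (sq_nonneg _)) hx.2.2.2)
      (fun k => sq_nonneg _) (lp.hasSum_norm_sq ψ)]
    refine lintegral_congr_ae (hgood.mono fun x hx => ?_)
    exact lintegral_ofReal_norm_tsum_conj_gkCoeff_mul_sq_mul hc0 hx.1 hx.2.1.summable hμ ψ
      hx.2.2.2
  rw [integral_integral_swap_eq_toReal_of_nonneg hf_meas hf_nonneg
    (hkey ▸ ENNReal.ofReal_ne_top), hkey, ENNReal.toReal_ofReal (sq_nonneg _)]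

theorem gazeauKlauder_resolution_of_identity_general
    (J : ℕ → ℝ)
    (c : ℕ → ℝ) (hc : ∀ k, 0 < c k)
    (R : ℝ≥0∞)
    (NN : ℝ → ℝ)
    (hNN : ∀ x : ℝ, 0 ≤ x → ENNReal.ofReal x < R →
      HasSum (fun k => x ^ k / c k) (NN x ^ 2) ∧ 0 < NN x)
    (τ : ℝ → ℝ) (hτ_meas : Measurable τ)
    (hτ_nonneg : ∀ x : ℝ, 0 ≤ x → ENNReal.ofReal x < R → 0 ≤ τ x)
    (hmoment : ∀ k : ℕ,
      ∫ x in {x : ℝ | 0 ≤ x ∧ ENNReal.ofReal x < R}, (x ^ k / NN x ^ 2) * τ x = c k)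
    (μ : Measure ℝ)
    (hμ : ∀ k l : ℕ,
      ∫ y, Complex.exp (Complex.I * (((J k - J l : ℝ)) : ℂ) * (y : ℂ)) ∂μ =
        if k = l then 1 else 0)
    (ψ : lp (fun _ : ℕ => ℂ) 2) :
    ∫ y, (∫ x in {x : ℝ | 0 ≤ x ∧ ENNReal.ofReal x < R},
        ‖∑' k, (starRingEnd ℂ) (gkCoeff NN c J x y k) * ψ k‖ ^ 2 * τ x) ∂μ
      = ‖ψ‖ ^ 2 := by
  have : IsFiniteMeasure μ := by
    have hone : Integrable (fun _ => (1 : ℂ)) μ :=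
      .of_integral_ne_zero (by simpa using (hμ 0 0).trans_ne one_ne_zero)
    exact (integrable_const_iff.1 hone).resolve_left one_ne_zero
  have hS : MeasurableSet {x : ℝ | 0 ≤ x ∧ ENNReal.ofReal x < R} :=
    measurableSet_Ici.inter (measurableSet_lt ENNReal.measurable_ofReal measurable_const)
  refine gazeauKlauder_resolution_of_identity_of_ae hc
    (ae_restrict_of_forall_mem hS fun x hx => ?_) hτ_meas.aemeasurable hmoment hμ ψ
  obtain ⟨hsum, hpos⟩ := hNN x hx.1 hx.2
  exact ⟨hx.1, hsum, hpos.le, hτ_nonneg x hx.1 hx.2⟩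

/-- Resolution of identity for Gazeau–Klauder coherent states.
With `(J_k)` distinct reals, `c_k > 0`, `N(x)² = ∑ x^k/c_k` convergent and positive on
`[0,R)`, a weight `τ ≥ 0` satisfying the moment conditions
`∫_0^R (x^k/N(x)²) τ(x) dx = c_k`, and a measure `μ` with
`∫ e^{i(J_k−J_l)y} μ(dy) = δ_{kl}`, one has, for every `ψ ∈ ℓ²(ℕ₀)`,
`∫_ℝ ∫_0^R |⟨J,x,y|ψ⟩|² τ(x) dx μ(dy) = ‖ψ‖²`, where
`⟨J,x,y|ψ⟩ = ∑_k conj(gkCoeff k) ψ_k`. -/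
theorem gazeauKlauder_resolution_of_identity
    (J : ℕ → ℝ) (hJ : Function.Injective J)
    (c : ℕ → ℝ) (hc : ∀ k, 0 < c k)
    (R : ℝ≥0∞) (hR : 0 < R)
    (NN : ℝ → ℝ)
    (hNN : ∀ x : ℝ, 0 ≤ x → ENNReal.ofReal x < R →
      HasSum (fun k => x ^ k / c k) (NN x ^ 2) ∧ 0 < NN x)
    (τ : ℝ → ℝ) (hτ_meas : Measurable τ)
    (hτ_nonneg : ∀ x : ℝ, 0 ≤ x → ENNReal.ofReal x < R → 0 ≤ τ x)
    (hmoment : ∀ k : ℕ,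
      ∫ x in {x : ℝ | 0 ≤ x ∧ ENNReal.ofReal x < R}, (x ^ k / NN x ^ 2) * τ x = c k)
    (μ : Measure ℝ)
    (hμ : ∀ k l : ℕ,
      ∫ y, Complex.exp (Complex.I * (((J k - J l : ℝ)) : ℂ) * (y : ℂ)) ∂μ =
        if k = l then 1 else 0)
    (ψ : lp (fun _ : ℕ => ℂ) 2) :
    ∫ y, (∫ x in {x : ℝ | 0 ≤ x ∧ ENNReal.ofReal x < R},
        ‖∑' k, (starRingEnd ℂ) (gkCoeff NN c J x y k) * ψ k‖ ^ 2 * τ x) ∂μ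
      = ‖ψ‖ ^ 2 :=
  gazeauKlauder_resolution_of_identity_general J c hc R NN hNN τ hτ_meas hτ_nonneg hmoment μ hμ ψ
end
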